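/- For any random variables W, X, Y, Z on a finite probability space: I(X;Y|W) = H(Z|W) + I(X;Y|W,Z) whenever H(Z|X) = 0 and H(Z|Y) = 0. -/

import Mathlib

open Finset

/-- Probability mass of the event `X = a` under weights `p`. -/
noncomputable def pmass {Ω α : Type} [Fintype Ω] [DecidableEq α]
    (p : Ω → ℝ) (X : Ω → α) (a : α) : ℝ :=
  ∑ ω, if X ω = a then p ω else 0

/-- Shannon entropy (base 2) of a random variable `X` on a finite space. -/
noncomputable def ent {Ω α : Type} [Fintype Ω] [Fintype α] [DecidableEq α]
    (p : Ω → ℝ) (X : Ω → α) : ℝ :=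
  ∑ a, -(pmass p X a * Real.logb 2 (pmass p X a))

/-- Conditional Shannon entropy `H(X|Y) = H(X,Y) - H(Y)`. -/
noncomputable def condEnt {Ω α β : Type} [Fintype Ω] [Fintype α] [Fintype β]
    [DecidableEq α] [DecidableEq β] (p : Ω → ℝ) (X : Ω → α) (Y : Ω → β) : ℝ :=
  ent p (fun ω => (X ω, Y ω)) - ent p Y

/-- Conditional mutual information `I(X;Y|W) = H(X|W) + H(Y|W) - H(X,Y|W)`. -/
noncomputable def condMI {Ω α β γ : Type} [Fintype Ω] [Fintype α] [Fintype β] [Fintype γ]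
    [DecidableEq α] [DecidableEq β] [DecidableEq γ]
    (p : Ω → ℝ) (X : Ω → α) (Y : Ω → β) (W : Ω → γ) : ℝ :=
  condEnt p X W + condEnt p Y W - condEnt p (fun ω => (X ω, Y ω)) W

/-!
Conditioning additionally on `Z` changes `H(X | W)`, `H(Y | W)` and `H(X, Y | W)` by the same
amount `H(W) - H(W, Z)`, because `Z` is almost surely a function of `X` and of `Y`, so adjoining it
to `(X, W)`, `(Y, W)` or `(X, Y, W)` does not change the entropy. Hence `I(X; Y | W, Z)` differs
from `I(X; Y | W)` by exactly `H(W, Z) - H(W) = H(Z | W)`. That `Z` is a.s. a function of `X` is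
read off `H(Z | X) = 0`: writing `H(Z | X) = ∑ P(z, x) log (P(x) / P(z, x))`, every term is
nonnegative, so each `P(z, x)` is `0` or `P(x)`.
-/

section Entropy

variable {Ω α β γ : Type}

/-- `Z` is almost surely a function of `V`. -/
def IsDeterminedBy (p : Ω → ℝ) (Z : Ω → γ) (V : Ω → α) : Prop :=
  ∀ ω ω', p ω ≠ 0 → p ω' ≠ 0 → V ω = V ω' → Z ω = Z ω'

lemma IsDeterminedBy.of_comp {p : Ω → ℝ} {Z : Ω → γ} {V : Ω → β} {f : β → α}
    (h : IsDeterminedBy p Z (fun ω => f (V ω))) : IsDeterminedBy p Z V :=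
  fun ω ω' hω hω' hV => h ω ω' hω hω' (congrArg f hV)

variable [Fintype Ω]

lemma pmass_nonneg [DecidableEq α] {p : Ω → ℝ} (hp0 : ∀ ω, 0 ≤ p ω) (X : Ω → α) (a : α) :
    0 ≤ pmass p X a :=
  sum_nonneg fun ω _ => by split_ifs <;> simp [hp0 ω]

lemma le_pmass_apply [DecidableEq α] {p : Ω → ℝ} (hp0 : ∀ ω, 0 ≤ p ω) (X : Ω → α) (ω : Ω) :
    p ω ≤ pmass p X (X ω) := by
  calc p ω = if X ω = X ω then p ω else 0 := by simp
    _ ≤ pmass p X (X ω) :=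
      single_le_sum (f := fun ω' => if X ω' = X ω then p ω' else 0)
        (fun ω' _ => by split_ifs <;> simp [hp0 ω']) (mem_univ ω)

lemma pmass_pair_le_pmass [DecidableEq α] [DecidableEq γ] {p : Ω → ℝ} (hp0 : ∀ ω, 0 ≤ p ω)
    (Z : Ω → γ) (X : Ω → α) (c : γ) (a : α) :
    pmass p (fun ω => (Z ω, X ω)) (c, a) ≤ pmass p X a :=
  sum_le_sum fun ω _ => by
    by_cases h : X ω = a <;> by_cases h' : Z ω = c <;> simp [h, h', hp0 ω]

lemma sum_pmass_pair [DecidableEq α] [DecidableEq γ] [Fintype γ] (p : Ω → ℝ)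
    (Z : Ω → γ) (X : Ω → α) (a : α) :
    ∑ c, pmass p (fun ω => (Z ω, X ω)) (c, a) = pmass p X a := by
  unfold pmass
  rw [sum_comm]
  refine sum_congr rfl fun ω _ => ?_
  by_cases h : X ω = a <;> simp [h]

lemma pmass_congr [DecidableEq α] {p : Ω → ℝ} {X X' : Ω → α}
    (h : ∀ ω, p ω ≠ 0 → X ω = X' ω) : pmass p X = pmass p X' := by
  funext a
  refine sum_congr rfl fun ω _ => ?_
  by_cases hω : p ω = 0
  · simp [hω]
  · rw [h ω hω]

lemma ent_congr [Fintype α] [DecidableEq α] {p : Ω → ℝ} {X X' : Ω → α}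
    (h : ∀ ω, p ω ≠ 0 → X ω = X' ω) : ent p X = ent p X' := by
  simp only [ent, pmass_congr h]

lemma ent_comp_of_injective [Fintype α] [Fintype β] [DecidableEq α] [DecidableEq β]
    (p : Ω → ℝ) (X : Ω → α) {e : α → β} (he : Function.Injective e) :
    ent p (fun ω => e (X ω)) = ent p X := by
  refine (Fintype.sum_of_injective e he _ _ (fun b hb => ?_) (fun a => ?_)).symm
  · have : pmass p (fun ω => e (X ω)) b = 0 :=
      sum_eq_zero fun ω _ => if_neg fun h => hb ⟨X ω, h⟩
    simp [this]
  · have : pmass p (fun ω => e (X ω)) (e a) = pmass p X a :=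
      sum_congr rfl fun ω _ => by simp only [he.eq_iff]
    rw [this]

lemma ent_pair_eq_of_isDeterminedBy [Fintype α] [Fintype γ] [DecidableEq α] [DecidableEq γ]
    {p : Ω → ℝ} {Z : Ω → γ} {V : Ω → α} (h : IsDeterminedBy p Z V) :
    ent p (fun ω => (Z ω, V ω)) = ent p V := by
  rcases isEmpty_or_nonempty Ω with _ | ⟨⟨ω₀⟩⟩
  · simp [ent, pmass]
  classical
  let g : α → γ := fun a => Z (if hv : ∃ ω, p ω ≠ 0 ∧ V ω = a then hv.choose else ω₀)
  have hg : ∀ ω, p ω ≠ 0 → (Z ω, V ω) = (g (V ω), V ω) := by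
    intro ω hω
    have hv : ∃ ω', p ω' ≠ 0 ∧ V ω' = V ω := ⟨ω, hω, rfl⟩
    simp only [g, dif_pos hv, Prod.mk.injEq, and_true]
    exact h ω _ hω hv.choose_spec.1 hv.choose_spec.2.symm
  rw [ent_congr hg, ent_comp_of_injective p V (e := fun a => (g a, a))
    fun a b hab => congrArg Prod.snd hab]

lemma ent_prod_eq_of_isDeterminedBy [Fintype α] [Fintype β] [Fintype γ]
    [DecidableEq α] [DecidableEq β] [DecidableEq γ]
    {p : Ω → ℝ} {Z : Ω → γ} {V : Ω → α} (h : IsDeterminedBy p Z V) (W : Ω → β) :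
    ent p (fun ω => (V ω, (W ω, Z ω))) = ent p (fun ω => (V ω, W ω)) := by
  have he : Function.Injective fun x : α × β × γ => (x.2.2, (x.1, x.2.1)) :=
    fun x y hxy => by grind
  rw [← ent_comp_of_injective p _ he]
  exact ent_pair_eq_of_isDeterminedBy (h.of_comp (f := Prod.fst) (V := fun ω => (V ω, W ω)))

end Entropy

lemma mul_logb_le_mul_logb {b q P : ℝ} (hb : 1 < b) (hq : 0 ≤ q) (hqP : q ≤ P) :
    q * Real.logb b q ≤ q * Real.logb b P := by
  rcases hq.eq_or_lt with rfl | hq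
  · simp
  · exact mul_le_mul_of_nonneg_left (Real.logb_le_logb_of_le hb hq hqP) hq.le

lemma mul_logb_lt_mul_logb {b q P : ℝ} (hb : 1 < b) (hq : 0 < q) (hqP : q < P) :
    q * Real.logb b q < q * Real.logb b P :=
  mul_lt_mul_of_pos_left (Real.logb_lt_logb hb hq hqP) hq

section CondEnt

variable {Ω α γ : Type} [Fintype Ω] [Fintype α] [Fintype γ] [DecidableEq α] [DecidableEq γ]

lemma condEnt_eq_sum (p : Ω → ℝ) (Z : Ω → γ) (X : Ω → α) :
    condEnt p Z X = ∑ a, ∑ c,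
      (pmass p (fun ω => (Z ω, X ω)) (c, a) * Real.logb 2 (pmass p X a) -
        pmass p (fun ω => (Z ω, X ω)) (c, a) *
          Real.logb 2 (pmass p (fun ω => (Z ω, X ω)) (c, a))) := by
  unfold condEnt ent
  rw [Fintype.sum_prod_type, sum_comm, ← sum_sub_distrib]
  refine sum_congr rfl fun a _ => ?_
  rw [← sum_pmass_pair p Z X a, sum_mul, sum_pmass_pair, ← sum_neg_distrib, ← sum_sub_distrib]
  exact sum_congr rfl fun c _ => by ring

lemma pmass_pair_eq_zero_or_eq_of_condEnt_eq_zero {p : Ω → ℝ} (hp0 : ∀ ω, 0 ≤ p ω)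
    {Z : Ω → γ} {X : Ω → α} (h : condEnt p Z X = 0) (c : γ) (a : α) :
    pmass p (fun ω => (Z ω, X ω)) (c, a) = 0 ∨
      pmass p (fun ω => (Z ω, X ω)) (c, a) = pmass p X a := by
  rw [condEnt_eq_sum] at h
  set q : γ → α → ℝ := fun c a => pmass p (fun ω => (Z ω, X ω)) (c, a)
  have hle : ∀ c a, q c a ≤ pmass p X a := pmass_pair_le_pmass hp0 Z X
  have hterm : ∀ a c, 0 ≤ q c a * Real.logb 2 (pmass p X a) - q c a * Real.logb 2 (q c a) :=
    fun a c => sub_nonneg.2 (mul_logb_le_mul_logb one_lt_two (pmass_nonneg hp0 _ _) (hle c a))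
  have hzero := (sum_eq_zero_iff_of_nonneg fun c _ => hterm a c).1
    ((sum_eq_zero_iff_of_nonneg fun a _ => sum_nonneg fun c _ => hterm a c).1 h a (mem_univ a))
    c (mem_univ c)
  rcases (pmass_nonneg hp0 _ (c, a)).eq_or_lt with hq0 | hq0
  · exact Or.inl hq0.symm
  rcases (hle c a).eq_or_lt with hqP | hqP
  · exact Or.inr hqP
  have := mul_logb_lt_mul_logb one_lt_two hq0 hqP
  linarith

lemma isDeterminedBy_of_condEnt_eq_zero {p : Ω → ℝ} (hp0 : ∀ ω, 0 ≤ p ω)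
    {Z : Ω → γ} {X : Ω → α} (h : condEnt p Z X = 0) : IsDeterminedBy p Z X := by
  intro ω ω' hω hω' hX
  by_contra hZ
  have hfull : ∀ ω₁, p ω₁ ≠ 0 → X ω₁ = X ω →
      pmass p (fun ω => (Z ω, X ω)) (Z ω₁, X ω) = pmass p X (X ω) := by
    intro ω₁ hω₁ hX₁
    have hpos : 0 < pmass p (fun ω => (Z ω, X ω)) (Z ω₁, X ω) := by
      rw [← hX₁]
      exact ((hp0 ω₁).lt_of_ne' hω₁).trans_le (le_pmass_apply hp0 _ ω₁)
    exact (pmass_pair_eq_zero_or_eq_of_condEnt_eq_zero hp0 h _ _).resolve_left hpos.ne'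
  have hpos : 0 < pmass p X (X ω) := ((hp0 ω).lt_of_ne' hω).trans_le (le_pmass_apply hp0 X ω)
  have hpair : ∑ c ∈ {Z ω, Z ω'}, pmass p (fun ω => (Z ω, X ω)) (c, X ω) ≤ pmass p X (X ω) := by
    rw [← sum_pmass_pair p Z X]
    exact sum_le_sum_of_subset_of_nonneg (subset_univ _) fun c _ _ => pmass_nonneg hp0 _ _
  rw [sum_pair hZ, hfull ω hω rfl, hfull ω' hω' hX.symm] at hpair
  linarith

end CondEnt

theorem stmt_6_general {Ω α β γ δ : Type} [Fintype Ω] [Fintype α] [Fintype β] [Fintype γ] [Fintype δ]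
    [DecidableEq α] [DecidableEq β] [DecidableEq γ] [DecidableEq δ]
    (p : Ω → ℝ) (hp0 : ∀ ω, 0 ≤ p ω)
    (W : Ω → δ) (X : Ω → α) (Y : Ω → β) (Z : Ω → γ)
    (hZX : condEnt p Z X = 0) (hZY : condEnt p Z Y = 0) :
    condMI p X Y W = condEnt p Z W + condMI p X Y (fun ω => (W ω, Z ω)) := by
  have hX := isDeterminedBy_of_condEnt_eq_zero hp0 hZX
  have hY := isDeterminedBy_of_condEnt_eq_zero hp0 hZY
  have hXY : IsDeterminedBy p Z (fun ω => (X ω, Y ω)) := hX.of_comp (f := Prod.fst)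
  have hswap : ent p (fun ω => (Z ω, W ω)) = ent p (fun ω => (W ω, Z ω)) :=
    (ent_comp_of_injective p _ Prod.swap_injective).symm
  unfold condMI condEnt
  rw [ent_prod_eq_of_isDeterminedBy hX, ent_prod_eq_of_isDeterminedBy hY,
    ent_prod_eq_of_isDeterminedBy hXY, hswap]
  ring

/-- if `H(Z|X) = 0` and `H(Z|Y) = 0` then
`I(X;Y|W) = H(Z|W) + I(X;Y|(W,Z))`. -/
theorem stmt_6 {Ω α β γ δ : Type} [Fintype Ω] [Fintype α] [Fintype β] [Fintype γ] [Fintype δ]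
    [DecidableEq α] [DecidableEq β] [DecidableEq γ] [DecidableEq δ]
    (p : Ω → ℝ) (hp0 : ∀ ω, 0 ≤ p ω) (hp1 : ∑ ω, p ω = 1)
    (W : Ω → δ) (X : Ω → α) (Y : Ω → β) (Z : Ω → γ)
    (hZX : condEnt p Z X = 0) (hZY : condEnt p Z Y = 0) :
    condMI p X Y W = condEnt p Z W + condMI p X Y (fun ω => (W ω, Z ω)) :=
  stmt_6_general p hp0 W X Y Z hZX hZY
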